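/- arXiv:2510.15546 — 2 statements merged into one kernel-verified Lean document; each statement's English description precedes it below -/
import Mathlib

section
/- Universal 4(d−1) bound for the oriented-edge adjacency operator (the reduction giving ‖Δ̃₁‖ ≤ 4(d−1) for d-regular graphs). Let G be a simple graph on a countable vertex type V in which every vertex has degree at most d, with d ≥ 1. Let E⃗ = {(x,y) ∈ V × V : x and y adjacent in G} and define A on ℓ²(E⃗) by (Af)(x,y) = ∑ f(u,v), the sum over all oriented edges (u,v) whose underlying unordered edge {u,v} is different from {x,y} and shares an endpoint with {x,y}. Then A is a well-defined bounded linear operator with ‖A‖ ≤ 4(d − 1). -/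
open scoped InnerProductSpace ComplexConjugate

/-- The set of oriented edges of a simple graph `G`. -/
def OrientedEdge {V : Type*} (G : SimpleGraph V) : Type _ :=
  {p : V × V // G.Adj p.1 p.2}

/-!
The operator sums `f` over the set `S e` of oriented edges meeting `e`. This relation is
symmetric and `#(S e) ≤ N := 4(d-1)`: an edge meets at most `d-1` further edges at each endpoint,
each with two orientations. For any symmetric neighbourhood structure with `#(S i) ≤ N`,
Cauchy–Schwarz gives `‖∑_{j ∈ S i} f j‖² ≤ N ∑_{j ∈ S i} ‖f j‖²`, and summing over `i` counts
each `‖f j‖²` at most `N` times, so the operator has norm at most `N` on `ℓ²`.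
-/

open Finset

section NeighborSum

variable {ι : Type*} (S : ι → Finset ι) {N : ℕ}

theorem norm_sum_sq_le_card_mul {E : Type*} [SeminormedAddCommGroup E] (s : Finset ι)
    (f : ι → E) : ‖∑ j ∈ s, f j‖ ^ 2 ≤ #s * ∑ j ∈ s, ‖f j‖ ^ 2 :=
  (pow_le_pow_left₀ (norm_nonneg _) (norm_sum_le _ _) 2).trans sq_sum_le_card_mul_sum_sq

theorem sum_sum_le_mul_sum_biUnion [DecidableEq ι] (hS : ∀ i j, j ∈ S i → i ∈ S j)
    (hN : ∀ i, #(S i) ≤ N) {g : ι → ℝ} (hg : ∀ i, 0 ≤ g i) (s : Finset ι) :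
    ∑ i ∈ s, ∑ j ∈ S i, g j ≤ N * ∑ j ∈ s.biUnion S, g j :=
  calc ∑ i ∈ s, ∑ j ∈ S i, g j
      = ∑ j ∈ s.biUnion S, ∑ _i ∈ s.filter (j ∈ S ·), g j :=
        sum_comm' fun i j => by simp only [mem_filter, mem_biUnion]; grind
    _ ≤ ∑ j ∈ s.biUnion S, N * g j := by
        refine sum_le_sum fun j _ => ?_
        rw [sum_const, nsmul_eq_mul]
        have hcard : #(s.filter (j ∈ S ·)) ≤ N :=
          (card_le_card fun i hi => hS i j (mem_filter.1 hi).2).trans (hN j)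
        gcongr
        exact hg j
    _ = N * ∑ j ∈ s.biUnion S, g j := (mul_sum ..).symm

variable {E : Type*} [NormedAddCommGroup E]

def neighborSum (f : ι → E) (i : ι) : E :=
  ∑ j ∈ S i, f j

theorem sum_norm_neighborSum_sq_le (hS : ∀ i j, j ∈ S i → i ∈ S j) (hN : ∀ i, #(S i) ≤ N)
    (f : lp (fun _ : ι => E) 2) (s : Finset ι) :
    ∑ i ∈ s, ‖neighborSum S f i‖ ^ 2 ≤ (N * ‖f‖) ^ 2 := by
  classical
  have hf : ∑ j ∈ s.biUnion S, ‖f j‖ ^ 2 ≤ ‖f‖ ^ 2 := by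
    simpa [Real.rpow_two] using lp.sum_rpow_le_norm_rpow (p := 2) (by norm_num) f (s.biUnion S)
  calc ∑ i ∈ s, ‖neighborSum S f i‖ ^ 2
      ≤ ∑ i ∈ s, N * ∑ j ∈ S i, ‖f j‖ ^ 2 := by
        refine sum_le_sum fun i _ => (norm_sum_sq_le_card_mul _ _).trans ?_
        gcongr
        exact_mod_cast hN i
    _ ≤ N * (N * ∑ j ∈ s.biUnion S, ‖f j‖ ^ 2) := by
        rw [← mul_sum]
        gcongr
        exact sum_sum_le_mul_sum_biUnion S hS hN (fun j => by positivity) s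
    _ ≤ (N * ‖f‖) ^ 2 := by
        rw [mul_pow, ← mul_assoc, ← sq]
        gcongr

theorem memℓp_neighborSum (hS : ∀ i j, j ∈ S i → i ∈ S j) (hN : ∀ i, #(S i) ≤ N)
    (f : lp (fun _ : ι => E) 2) : Memℓp (neighborSum S f) 2 :=
  memℓp_gen' fun s => by
    simpa [Real.rpow_two] using sum_norm_neighborSum_sq_le S hS hN f s

variable (𝕜 : Type*) [NontriviallyNormedField 𝕜] [NormedSpace 𝕜 E]

noncomputable def neighborSumCLM (hS : ∀ i j, j ∈ S i → i ∈ S j) (hN : ∀ i, #(S i) ≤ N) :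
    lp (fun _ : ι => E) 2 →L[𝕜] lp (fun _ : ι => E) 2 :=
  LinearMap.mkContinuous
    { toFun := fun f => ⟨neighborSum S f, memℓp_neighborSum S hS hN f⟩
      map_add' := fun f g => by ext i; exact sum_add_distrib
      map_smul' := fun c f => by ext i; exact (smul_sum ..).symm }
    N fun f => lp.norm_le_of_forall_sum_le (p := 2) (by norm_num) (by positivity) fun s => by
      simpa [Real.rpow_two] using sum_norm_neighborSum_sq_le S hS hN f s

theorem norm_neighborSumCLM_le (hS : ∀ i j, j ∈ S i → i ∈ S j) (hN : ∀ i, #(S i) ≤ N) :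
    ‖neighborSumCLM (E := E) S 𝕜 hS hN‖ ≤ N :=
  LinearMap.mkContinuous_norm_le _ N.cast_nonneg _

end NeighborSum

section

variable {V : Type*} [DecidableEq V]

def pairsThrough (x : V) (s : Finset V) : Finset (V × V) :=
  s.image (x, ·) ∪ s.image (·, x)

theorem card_pairsThrough_le (x : V) (s : Finset V) : #(pairsThrough x s) ≤ 2 * #s :=
  (card_union_le _ _).trans (by grind [card_image_le])

end

namespace OrientedEdge

variable {V : Type*} {G : SimpleGraph V}

def Meets (e e' : OrientedEdge G) : Prop :=
  s(e'.1.1, e'.1.2) ≠ s(e.1.1, e.1.2) ∧ (e.1.1 ∈ s(e'.1.1, e'.1.2) ∨ e.1.2 ∈ s(e'.1.1, e'.1.2))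

theorem Meets.symm {e e' : OrientedEdge G} (h : e.Meets e') : e'.Meets e := by
  obtain ⟨hne, hmem⟩ := h
  simp only [Sym2.mem_iff] at hmem ⊢
  exact ⟨hne.symm, by grind⟩

variable [DecidableEq V]

instance (e e' : OrientedEdge G) : Decidable (e.Meets e') :=
  inferInstanceAs (Decidable (_ ∧ _))

variable [∀ v, Fintype (G.neighborSet v)]

def meetingCandidates (e : OrientedEdge G) : Finset (V × V) :=
  pairsThrough e.1.1 ((G.neighborFinset e.1.1).erase e.1.2) ∪
    pairsThrough e.1.2 ((G.neighborFinset e.1.2).erase e.1.1)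

theorem val_mem_meetingCandidates {e e' : OrientedEdge G} (h : e.Meets e') :
    e'.1 ∈ meetingCandidates e := by
  obtain ⟨⟨x, y⟩, hxy⟩ := e
  obtain ⟨⟨u, v⟩, huv⟩ := e'
  obtain ⟨hne, hmem⟩ := h
  simp only [Sym2.mem_iff] at hmem
  simp only [meetingCandidates, pairsThrough, mem_union, mem_image, mem_erase,
    SimpleGraph.mem_neighborFinset, Prod.mk.injEq]
  rcases hmem with (rfl | rfl) | (rfl | rfl) <;> grind [SimpleGraph.Adj.symm, Sym2.eq_swap]

theorem card_meetingCandidates_le {d : ℕ} (hdeg : ∀ v, G.degree v ≤ d) (e : OrientedEdge G) :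
    #(meetingCandidates e) ≤ 4 * (d - 1) := by
  have hx := card_pairsThrough_le e.1.1 ((G.neighborFinset e.1.1).erase e.1.2)
  have hy := card_pairsThrough_le e.1.2 ((G.neighborFinset e.1.2).erase e.1.1)
  rw [card_erase_of_mem (by simpa using e.2), SimpleGraph.card_neighborFinset_eq_degree] at hx
  rw [card_erase_of_mem (by simpa using e.2.symm), SimpleGraph.card_neighborFinset_eq_degree] at hy
  have := card_union_le (pairsThrough e.1.1 ((G.neighborFinset e.1.1).erase e.1.2))
    (pairsThrough e.1.2 ((G.neighborFinset e.1.2).erase e.1.1))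
  grind [meetingCandidates]

noncomputable def meetingEdges (e : OrientedEdge G) : Finset (OrientedEdge G) :=
  ((meetingCandidates e).preimage (fun e' : OrientedEdge G => e'.1)
    Subtype.val_injective.injOn).filter e.Meets

theorem mem_meetingEdges {e e' : OrientedEdge G} : e' ∈ meetingEdges e ↔ e.Meets e' := by
  rw [meetingEdges, mem_filter]
  exact ⟨And.right, fun h => ⟨mem_preimage.2 (val_mem_meetingCandidates h), h⟩⟩

theorem card_meetingEdges_le {d : ℕ} (hdeg : ∀ v, G.degree v ≤ d) (e : OrientedEdge G) :
    #(meetingEdges e) ≤ 4 * (d - 1) :=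
  (card_le_card_of_injOn Subtype.val (fun _ h => val_mem_meetingCandidates (mem_meetingEdges.1 h))
    Subtype.val_injective.injOn).trans (card_meetingCandidates_le hdeg e)

theorem hasSum_ite_meets_mul {R : Type*} [NonAssocSemiring R] [TopologicalSpace R]
    (f : OrientedEdge G → R) (e : OrientedEdge G) :
    HasSum (fun e' => (if e.Meets e' then 1 else 0) * f e') (∑ e' ∈ meetingEdges e, f e') := by
  have hzero : ∀ e' ∉ meetingEdges e, (if e.Meets e' then 1 else 0) * f e' = 0 := fun e' h => by
    rw [if_neg (mt mem_meetingEdges.2 h), zero_mul]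
  have hsum := hasSum_sum_of_ne_finset_zero (L := .unconditional _) hzero
  rwa [sum_congr rfl fun e' h => by rw [if_pos (mem_meetingEdges.1 h), one_mul]] at hsum

end OrientedEdge

/-- **Universal `4(d-1)` bound for the oriented-edge adjacency operator.** -/
theorem oriented_edge_adjacency_universal_bound
    (V : Type*) [Countable V] [DecidableEq V]
    (G : SimpleGraph V) [∀ v : V, Fintype (G.neighborSet v)]
    (d : ℕ) (hd : 1 ≤ d) (hdeg : ∀ v : V, G.degree v ≤ d) :
    ∃ A : lp (fun _ : OrientedEdge G => ℂ) 2 →L[ℂ] lp (fun _ : OrientedEdge G => ℂ) 2,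
      (∀ f : lp (fun _ : OrientedEdge G => ℂ) 2, ∀ e : OrientedEdge G,
        Summable (fun e' : OrientedEdge G =>
          (if Sym2.mk e'.1.1 e'.1.2 ≠ Sym2.mk e.1.1 e.1.2 ∧
              (e.1.1 ∈ Sym2.mk e'.1.1 e'.1.2 ∨ e.1.2 ∈ Sym2.mk e'.1.1 e'.1.2) then (1 : ℂ) else 0) * f e')) ∧
      (∀ f : lp (fun _ : OrientedEdge G => ℂ) 2, ∀ e : OrientedEdge G,
        A f e = ∑' e' : OrientedEdge G,
          (if Sym2.mk e'.1.1 e'.1.2 ≠ Sym2.mk e.1.1 e.1.2 ∧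
              (e.1.1 ∈ Sym2.mk e'.1.1 e'.1.2 ∨ e.1.2 ∈ Sym2.mk e'.1.1 e'.1.2) then (1 : ℂ) else 0) * f e') ∧
      ‖A‖ ≤ 4 * ((d : ℝ) - 1) := by
  have hsymm (e e' : OrientedEdge G) : e' ∈ e.meetingEdges → e ∈ e'.meetingEdges :=
    fun h => OrientedEdge.mem_meetingEdges.2 (OrientedEdge.mem_meetingEdges.1 h).symm
  refine ⟨neighborSumCLM OrientedEdge.meetingEdges ℂ hsymm
    (OrientedEdge.card_meetingEdges_le hdeg),
    fun f e => (OrientedEdge.hasSum_ite_meets_mul f e).summable,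
    fun f e => (OrientedEdge.hasSum_ite_meets_mul f e).tsum_eq.symm, ?_⟩
  refine (norm_neighborSumCLM_le _ _ _ _).trans_eq ?_
  push_cast [hd]
  ring
end

section
/- Green/adjointness identity for symmetric cochains (Lemma 2.6 of the paper, symmetric case). Let V be a countable type, G a locally finite simple graph on V, and k ≥ 1. For j ∈ {k−1, k}, let F_j denote the set of tuples x : Fin (j+1) → V that are injective and pairwise adjacent, and let m_j : (Fin (j+1) → V) → ℝ satisfy m_j(x ∘ σ) = m_j(x) for every permutation σ of Fin (j+1), m_j(x) > 0 for x ∈ F_j and m_j(x) = 0 otherwise. Let f : (Fin k → V) → ℂ and g : (Fin (k+1) → V) → ℂ be finitely supported symmetric cochains, i.e. f(y ∘ σ) = f(y) and g(x ∘ σ) = g(x) for all permutations σ, with f vanishing off F_{k−1} and g vanishing off F_k. Define (d_sym f)(x) = ∑_{i : Fin (k+1)} f(x ∘ (Fin.succAbove i)) and, for y ∈ F_{k−1}, (δ_sym g)(y) = (1/m_{k−1}(y)) · ∑_{z ∈ V, z adjacent to every y(i)} m_k(Fin.snoc y z) · g(Fin.snoc y z). Then (1/(k+1)!) · ∑_{x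 ∈ F_k} m_k(x) · (d_sym f)(x) · conj(g(x)) = (1/k!) · ∑_{y ∈ F_{k−1}} m_{k−1}(y) · f(y) · conj((δ_sym g)(y)), where all sums have only finitely many nonzero terms. -/
open ComplexConjugate

/-- A tuple of vertices is a simplex of the clique complex of `G` when it is injective
and pairwise adjacent. -/
def IsSimplex {V : Type*} (G : SimpleGraph V) {m : ℕ} (x : Fin m → V) : Prop :=
  Function.Injective x ∧ ∀ i j : Fin m, i ≠ j → G.Adj (x i) (x j)

/-- Symmetric coboundary: `(d_sym f)(x) = ∑ i, f(x ∘ succAbove i)`. -/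
noncomputable def symCoboundary {V : Type*} {k : ℕ} (f : (Fin k → V) → ℂ) :
    (Fin (k + 1) → V) → ℂ :=
  fun x => ∑ i : Fin (k + 1), f (x ∘ i.succAbove)

/-- Weighted codifferential:
`(δ_sym g)(y) = (1 / m_{k-1}(y)) ∑_{z adjacent to all y i} m_k(snoc y z) g(snoc y z)`. -/
noncomputable def weightedCodifferential {V : Type*} (G : SimpleGraph V) {k : ℕ}
    (mlow : (Fin k → V) → ℝ) (mhigh : (Fin (k + 1) → V) → ℝ)
    (g : (Fin (k + 1) → V) → ℂ) : (Fin k → V) → ℂ :=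
  fun y => (1 / (mlow y : ℂ)) *
    ∑' z : {z : V // ∀ i : Fin k, G.Adj (y i) z},
      ((mhigh (Fin.snoc y (z : V)) : ℝ) : ℂ) * g (Fin.snoc y (z : V))

lemma summable_of_support_finite {α : Type*} {h : α → ℂ}
    (hfin : (Function.support h).Finite) : Summable h :=
  summable_of_ne_finset_zero (s := hfin.toFinset)
    (fun b hb => not_not.mp (fun hne => hb (hfin.mem_toFinset.mpr hne)))

lemma IsSimplex.comp_perm {V : Type*} {G : SimpleGraph V} {m : ℕ} {x : Fin m → V}
    (h : IsSimplex G x) (σ : Equiv.Perm (Fin m)) : IsSimplex G (x ∘ σ) :=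
  ⟨h.1.comp σ.injective, fun i j hij => h.2 _ _ (fun e => hij (σ.injective e))⟩

lemma isSimplex_comp_perm {V : Type*} (G : SimpleGraph V) {m : ℕ} (σ : Equiv.Perm (Fin m))
    (x : Fin m → V) : IsSimplex G (x ∘ σ) ↔ IsSimplex G x := by
  constructor
  · intro h
    have := h.comp_perm σ.symm
    have e : (x ∘ σ) ∘ σ.symm = x := funext fun i => by simp
    rwa [e] at this
  · exact fun h => h.comp_perm σ

lemma isSimplex_snoc {V : Type*} (G : SimpleGraph V) {k : ℕ} (y : Fin k → V) (z : V) :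
    IsSimplex G (Fin.snoc y z) ↔ IsSimplex G y ∧ ∀ j, G.Adj (y j) z := by
  constructor
  · rintro ⟨hinj, hadj⟩
    refine ⟨⟨fun i j hij => ?_, fun i j hij => ?_⟩, fun j => ?_⟩
    · have : (Fin.snoc y z : Fin (k+1) → V) i.castSucc
          = (Fin.snoc y z : Fin (k+1) → V) j.castSucc := by simpa using hij
      simpa using hinj this
    · have := hadj i.castSucc j.castSucc (by simpa using hij)
      simpa using this
    · have := hadj j.castSucc (Fin.last k) (Fin.castSucc_lt_last j).ne
      simpa using this
  · rintro ⟨⟨hinj, hadj⟩, hz⟩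
    constructor
    · intro a b hab
      induction a using Fin.lastCases with
      | last =>
        induction b using Fin.lastCases with
        | last => rfl
        | cast j => exact absurd (by simpa using hab.symm) (hz j).ne
      | cast i =>
        induction b using Fin.lastCases with
        | last => exact absurd (by simpa using hab) (hz i).ne
        | cast j => simp only [Fin.snoc_castSucc] at hab; exact congrArg _ (hinj hab)
    · intro a b hab
      induction a using Fin.lastCases with
      | last =>
        induction b using Fin.lastCases with
        | last => exact absurd rfl hab
        | cast j => simpa using (hz j).symm
      | cast i =>
        induction b using Fin.lastCases with
        | last => simpa using hz i
        | cast j =>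
          simp only [Fin.snoc_castSucc]
          exact hadj i j (fun e => hab (congrArg _ e))

/-- The permutation sending `last` to `i` and `castSucc j` to `succAbove i j`. -/
noncomputable def insPerm {k : ℕ} (i : Fin (k+1)) : Equiv.Perm (Fin (k+1)) :=
  Equiv.ofBijective (Fin.lastCases i i.succAbove)
    ((Finite.injective_iff_bijective).mp (by
      intro a b hab
      induction a using Fin.lastCases with
      | last =>
        induction b using Fin.lastCases with
        | last => rfl
        | cast j => simp at hab
      | cast a' =>
        induction b using Fin.lastCases with
        | last => simp at hab
        | cast b' => simp at hab; exact congrArg _ hab))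

lemma insPerm_comp {V : Type*} {k : ℕ} (i : Fin (k+1)) (y : Fin k → V) (z : V) :
    (Fin.insertNth i z y) ∘ (insPerm i) = Fin.snoc y z := by
  funext s
  induction s using Fin.lastCases with
  | last => simp [insPerm, Equiv.ofBijective]
  | cast j => simp [insPerm, Equiv.ofBijective]

lemma insertNth_eq_snoc_comp {V : Type*} {k : ℕ} (i : Fin (k+1)) (y : Fin k → V) (z : V) :
    Fin.insertNth i z y = Fin.snoc y z ∘ (insPerm i).symm := by
  rw [← insPerm_comp i y z]
  funext t
  simp

/-- Inserting a new vertex at position `i` gives an equivalence between pairs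
(simplex `y`, vertex `z` adjacent to all of `y`) and `(k+1)`-simplices. -/
noncomputable def insEquiv {V : Type*} (G : SimpleGraph V) {k : ℕ} (i : Fin (k+1)) :
    (Σ y : {y : Fin k → V // IsSimplex G y}, {z : V // ∀ j, G.Adj (y.1 j) z}) ≃
      {x : Fin (k+1) → V // IsSimplex G x} where
  toFun p := ⟨Fin.insertNth i p.2.1 p.1.1, by
    rw [insertNth_eq_snoc_comp, isSimplex_comp_perm, isSimplex_snoc]
    exact ⟨p.1.2, p.2.2⟩⟩
  invFun x := ⟨⟨x.1 ∘ i.succAbove, x.2.1.comp (Fin.succAbove_right_injective),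
      fun a b hab => x.2.2 _ _ (fun e => hab (Fin.succAbove_right_injective e))⟩,
    ⟨x.1 i, fun j => x.2.2 _ _ (Fin.succAbove_ne i j)⟩⟩
  left_inv := by
    rintro ⟨⟨y, hy⟩, ⟨z, hz⟩⟩
    have h1 : (Fin.insertNth i z y) ∘ i.succAbove = y := funext fun j => by simp
    have h2 : (Fin.insertNth i z y : Fin (k+1) → V) i = z := by simp
    refine Sigma.ext (Subtype.ext h1) ?_
    refine (Subtype.heq_iff_coe_eq ?_).mpr h2
    intro w; dsimp only; rw [h1]
  right_inv := by
    rintro ⟨x, hx⟩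
    refine Subtype.ext ?_
    funext t
    exact Fin.succAboveCases i (by simp) (fun j => by simp) t

/-- **Green/adjointness identity for symmetric cochains (Lemma 2.6, symmetric case).** -/
theorem green_identity_sym
    (V : Type*) [Countable V]
    (G : SimpleGraph V) (hlf : G.LocallyFinite)
    (k : ℕ) (hk : 1 ≤ k)
    (mlow : (Fin k → V) → ℝ) (mhigh : (Fin (k + 1) → V) → ℝ)
    (hmlow_perm : ∀ (σ : Equiv.Perm (Fin k)) (y : Fin k → V), mlow (y ∘ σ) = mlow y)
    (hmhigh_perm : ∀ (σ : Equiv.Perm (Fin (k + 1))) (x : Fin (k + 1) → V),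
      mhigh (x ∘ σ) = mhigh x)
    (hmlow_pos : ∀ y : Fin k → V, IsSimplex G y → 0 < mlow y)
    (hmlow_zero : ∀ y : Fin k → V, ¬IsSimplex G y → mlow y = 0)
    (hmhigh_pos : ∀ x : Fin (k + 1) → V, IsSimplex G x → 0 < mhigh x)
    (hmhigh_zero : ∀ x : Fin (k + 1) → V, ¬IsSimplex G x → mhigh x = 0)
    (f : (Fin k → V) → ℂ) (g : (Fin (k + 1) → V) → ℂ)
    (hf_fin : (Function.support f).Finite) (hg_fin : (Function.support g).Finite)
    (hf_sym : ∀ (σ : Equiv.Perm (Fin k)) (y : Fin k → V), f (y ∘ σ) = f y)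
    (hg_sym : ∀ (σ : Equiv.Perm (Fin (k + 1))) (x : Fin (k + 1) → V), g (x ∘ σ) = g x)
    (hf_supp : ∀ y : Fin k → V, ¬IsSimplex G y → f y = 0)
    (hg_supp : ∀ x : Fin (k + 1) → V, ¬IsSimplex G x → g x = 0) :
    (1 / ((k + 1).factorial : ℂ)) *
      ∑' x : {x : Fin (k + 1) → V // IsSimplex G x},
        ((mhigh x.1 : ℝ) : ℂ) * symCoboundary f x.1 * conj (g x.1)
    = (1 / (k.factorial : ℂ)) *
      ∑' y : {y : Fin k → V // IsSimplex G y},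
        ((mlow y.1 : ℝ) : ℂ) * f y.1 *
          conj (weightedCodifferential G mlow mhigh g y.1) := by
  classical
  set S : ℂ := ∑' p : Σ y : {y : Fin k → V // IsSimplex G y}, {z : V // ∀ j, G.Adj (y.1 j) z},
      ((mhigh (Fin.snoc p.1.1 p.2.1) : ℝ) : ℂ) * f p.1.1 * conj (g (Fin.snoc p.1.1 p.2.1))
    with hS
  -- LHS tsum equals (k+1) * S
  have hL : (∑' x : {x : Fin (k + 1) → V // IsSimplex G x},
      ((mhigh x.1 : ℝ) : ℂ) * symCoboundary f x.1 * conj (g x.1)) = ((k : ℂ) + 1) * S := by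
    have step1 : ∀ x : {x : Fin (k + 1) → V // IsSimplex G x},
        ((mhigh x.1 : ℝ) : ℂ) * symCoboundary f x.1 * conj (g x.1)
        = ∑ i : Fin (k+1), ((mhigh x.1 : ℝ) : ℂ) * f (x.1 ∘ i.succAbove) * conj (g x.1) := by
      intro x
      simp [symCoboundary, Finset.mul_sum, Finset.sum_mul]
    have hsumm : ∀ i : Fin (k+1), i ∈ Finset.univ → Summable
        (fun x : {x : Fin (k + 1) → V // IsSimplex G x} =>
          ((mhigh x.1 : ℝ) : ℂ) * f (x.1 ∘ i.succAbove) * conj (g x.1)) := by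
      intro i _
      apply summable_of_support_finite
      apply (hg_fin.preimage (Subtype.val_injective.injOn)).subset
      intro x hx
      simp only [Function.mem_support] at hx
      simp only [Set.mem_preimage, Function.mem_support]
      intro h0
      apply hx
      simp [h0]
    have step2 : ∀ i : Fin (k+1),
        (∑' x : {x : Fin (k + 1) → V // IsSimplex G x},
          ((mhigh x.1 : ℝ) : ℂ) * f (x.1 ∘ i.succAbove) * conj (g x.1)) = S := by
      intro i
      rw [hS, ← Equiv.tsum_eq (insEquiv G i)]
      apply tsum_congr
      rintro ⟨⟨y, hy⟩, ⟨z, hz⟩⟩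
      have e1 : Fin.insertNth i z y = Fin.snoc y z ∘ (insPerm i).symm :=
        insertNth_eq_snoc_comp i y z
      have e2 : (Fin.insertNth i z y) ∘ i.succAbove = y := funext fun j => by simp
      show ((mhigh (Fin.insertNth i z y) : ℝ) : ℂ) * f ((Fin.insertNth i z y) ∘ i.succAbove)
          * conj (g (Fin.insertNth i z y))
        = ((mhigh (Fin.snoc y z) : ℝ) : ℂ) * f y * conj (g (Fin.snoc y z))
      rw [e2, e1, hmhigh_perm, hg_sym]
    rw [tsum_congr step1, Summable.tsum_finsetSum hsumm, Finset.sum_congr rfl (fun i _ => step2 i),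
      Finset.sum_const]
    simp [nsmul_eq_mul]
  -- RHS tsum equals S
  have hR : (∑' y : {y : Fin k → V // IsSimplex G y},
      ((mlow y.1 : ℝ) : ℂ) * f y.1 * conj (weightedCodifferential G mlow mhigh g y.1)) = S := by
    have hys : ∀ y : {y : Fin k → V // IsSimplex G y},
        ((mlow y.1 : ℝ) : ℂ) * f y.1 * conj (weightedCodifferential G mlow mhigh g y.1)
        = ∑' z : {z : V // ∀ j, G.Adj (y.1 j) z},
            ((mhigh (Fin.snoc y.1 (z : V)) : ℝ) : ℂ) * f y.1
              * conj (g (Fin.snoc y.1 (z : V))) := by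
      intro y
      have hm0 : ((mlow y.1 : ℝ) : ℂ) ≠ 0 := by
        exact_mod_cast (hmlow_pos y.1 y.2).ne'
      have hconj : conj (∑' z : {z : V // ∀ j : Fin k, G.Adj (y.1 j) z},
            ((mhigh (Fin.snoc y.1 (z : V)) : ℝ) : ℂ) * g (Fin.snoc y.1 (z : V)))
          = ∑' z : {z : V // ∀ j : Fin k, G.Adj (y.1 j) z},
            ((mhigh (Fin.snoc y.1 (z : V)) : ℝ) : ℂ) * conj (g (Fin.snoc y.1 (z : V))) := by
        rw [show (conj (∑' z : {z : V // ∀ j : Fin k, G.Adj (y.1 j) z},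
            ((mhigh (Fin.snoc y.1 (z : V)) : ℝ) : ℂ) * g (Fin.snoc y.1 (z : V))))
          = star (∑' z : {z : V // ∀ j : Fin k, G.Adj (y.1 j) z},
            ((mhigh (Fin.snoc y.1 (z : V)) : ℝ) : ℂ) * g (Fin.snoc y.1 (z : V))) from rfl,
          tsum_star]
        apply tsum_congr
        intro z
        simp [Complex.conj_ofReal, mul_comm]
      rw [weightedCodifferential, map_mul, hconj, map_div₀, map_one, Complex.conj_ofReal]
      rw [show ((mlow y.1 : ℝ) : ℂ) * f y.1 * ((1 / ((mlow y.1 : ℝ) : ℂ)) *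
          ∑' z : {z : V // ∀ j : Fin k, G.Adj (y.1 j) z},
            ((mhigh (Fin.snoc y.1 (z : V)) : ℝ) : ℂ) * conj (g (Fin.snoc y.1 (z : V))))
        = f y.1 * ∑' z : {z : V // ∀ j : Fin k, G.Adj (y.1 j) z},
            ((mhigh (Fin.snoc y.1 (z : V)) : ℝ) : ℂ) * conj (g (Fin.snoc y.1 (z : V)))
        from by field_simp]
      rw [← tsum_mul_left]
      apply tsum_congr
      intro z
      ring
    rw [tsum_congr hys, hS]
    -- now use tsum_sigma
    have hsnoc_inj : Function.Injective
        (fun p : Σ y : {y : Fin k → V // IsSimplex G y}, {z : V // ∀ j, G.Adj (y.1 j) z} =>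
          (Fin.snoc p.1.1 p.2.1 : Fin (k+1) → V)) := by
      rintro ⟨⟨y, hy⟩, ⟨z, hz⟩⟩ ⟨⟨y', hy'⟩, ⟨z', hz'⟩⟩ h
      simp only at h
      have hyy : y = y' := funext fun j => by simpa using congrFun h j.castSucc
      have hzz : z = z' := by simpa using congrFun h (Fin.last k)
      subst hyy; subst hzz; rfl
    have hSsumm : Summable
        (fun p : Σ y : {y : Fin k → V // IsSimplex G y}, {z : V // ∀ j, G.Adj (y.1 j) z} =>
          ((mhigh (Fin.snoc p.1.1 p.2.1) : ℝ) : ℂ) * f p.1.1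
            * conj (g (Fin.snoc p.1.1 p.2.1))) := by
      apply summable_of_support_finite
      apply (hg_fin.preimage (hsnoc_inj.injOn)).subset
      intro p hp
      simp only [Function.mem_support] at hp
      simp only [Set.mem_preimage, Function.mem_support]
      intro h0
      apply hp
      simp [h0]
    exact (Summable.tsum_sigma hSsumm).symm
  rw [hL, hR]
  have hkf : (k.factorial : ℂ) ≠ 0 := Nat.cast_ne_zero.mpr k.factorial_ne_zero
  have hkf1 : (((k+1).factorial : ℕ) : ℂ) ≠ 0 := Nat.cast_ne_zero.mpr (k+1).factorial_ne_zero
  have h1 : (((k + 1).factorial : ℕ) : ℂ) = ((k : ℂ) + 1) * (k.factorial : ℂ) := by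
    rw [Nat.factorial_succ]
    push_cast
    ring
  rw [h1]
  have hk1 : ((k : ℂ) + 1) ≠ 0 := by
    have := Nat.cast_add_one_ne_zero (R := ℂ) k
    exact_mod_cast this
  field_simp
end
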